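/- arXiv:math/0208050 — 3 statements merged into one kernel-verified Lean document; each statement's English description precedes it below -/
import Mathlib

section
/- Let n be a nonnegative integer and let f_0, f_1, …, f_n : ℍ → ℂ be functions on the complex upper half-plane satisfying f_k(τ+1) = f_k(τ) for all τ ∈ ℍ and all 0 ≤ k ≤ n. If Σ_{k=0}^n τ^k · f_k(τ) = 0 for all τ ∈ ℍ, then f_k(τ) = 0 for all τ ∈ ℍ and all 0 ≤ k ≤ n. -/
/-! Fix `τ`. By periodicity each `f k` is constant on `τ + ℕ`, so the polynomial
`Σ f k τ • X ^ k` vanishes at the infinitely many points `τ + m`, hence all its coefficients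
vanish. -/

open UpperHalfPlane Finset Polynomial

theorem UpperHalfPlane.natCast_vadd_of_one_vadd {α : Type*} {g : ℍ → α}
    (hg : ∀ τ : ℍ, g ((1 : ℝ) +ᵥ τ) = g τ) (m : ℕ) (τ : ℍ) : g ((m : ℝ) +ᵥ τ) = g τ := by
  have hP : Function.Periodic (fun x : ℝ => g (x +ᵥ τ)) 1 := fun x => by
    simp only [add_comm x, add_vadd, hg]
  simpa using hP.nat_mul_eq m

theorem Polynomial.eq_zero_of_forall_isRoot_add_natCast {K : Type*} [Field K] [CharZero K]
    {p : K[X]} (a : K) (h : ∀ m : ℕ, p.IsRoot (a + m)) : p = 0 := by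
  refine p.eq_zero_of_infinite_isRoot (Set.Infinite.mono ?_ (Set.infinite_range_of_injective
    (f := fun m : ℕ => a + m) fun i j hij => by simpa using hij))
  rintro _ ⟨m, rfl⟩
  exact h m

theorem eq_zero_of_sum_pow_mul_add_natCast_eq_zero {K : Type*} [Field K] [CharZero K]
    (n : ℕ) (c : ℕ → K) (a : K) (h : ∀ m : ℕ, ∑ k ∈ range n, (a + m) ^ k * c k = 0) :
    ∀ k < n, c k = 0 := by
  intro k hk
  have hp : ∑ j ∈ range n, C (c j) * X ^ j = 0 :=
    eq_zero_of_forall_isRoot_add_natCast a fun m => by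
      simpa only [IsRoot, eval_finsetSum, eval_mul, eval_C, eval_pow, eval_X, mul_comm] using h m
  simpa [finsetSum_coeff, coeff_C_mul, coeff_X_pow, hk] using congrArg (coeff · k) hp

/-- Lemma 3.1: if `f₀, …, f_n : ℍ → ℂ` are `1`-periodic and
`Σ_{k=0}^n τ^k f_k(τ) = 0` for all `τ ∈ ℍ`, then all `f_k` vanish identically. -/
theorem stmt_2 (n : ℕ) (f : ℕ → UpperHalfPlane → ℂ)
    (hper : ∀ k ≤ n, ∀ τ : UpperHalfPlane, f k ((1 : ℝ) +ᵥ τ) = f k τ)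
    (hsum : ∀ τ : UpperHalfPlane, ∑ k ∈ Finset.range (n + 1), (τ : ℂ) ^ k * f k τ = 0) :
    ∀ k ≤ n, ∀ τ : UpperHalfPlane, f k τ = 0 := by
  intro k hk τ
  refine eq_zero_of_sum_pow_mul_add_natCast_eq_zero (n + 1) (f · τ) τ (fun m => ?_) k
    (Nat.lt_succ_of_le hk)
  rw [← hsum ((m : ℝ) +ᵥ τ)]
  refine sum_congr rfl fun j hj => ?_
  rw [natCast_vadd_of_one_vadd (hper j (Nat.lt_succ_iff.mp (mem_range.mp hj))), coe_vadd,
    add_comm, Complex.ofReal_natCast]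
end

section
/- Non-zero modular forms of different weights are linearly independent over ℂ: if n is a nonnegative integer and for each 0 ≤ k ≤ n, f_k is a modular form of weight k for the full modular group SL₂(ℤ), and Σ_{k=0}^n f_k(τ) = 0 for all τ ∈ ℍ, then f_k = 0 for every k. -/
open UpperHalfPlane Finset

open scoped MatrixGroups

open Polynomial

/-- Corollary 3.2: non-zero modular forms (for the full modular group `SL(2,ℤ)`)
of different weights are linearly independent over `ℂ`; i.e. if `f_k` is a modular
form of weight `k` for `0 ≤ k ≤ n` and `Σ_{k=0}^n f_k(τ) = 0` for all `τ ∈ ℍ`,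
then every `f_k` is zero. -/
theorem stmt_3 (n : ℕ)
    (f : (k : Fin (n + 1)) → ModularForm (⊤ : Subgroup SL(2, ℤ)) ((k : ℕ) : ℤ))
    (hsum : ∀ τ : UpperHalfPlane, ∑ k : Fin (n + 1), f k τ = 0) :
    ∀ k, f k = 0 := by
  suffices h : ∀ (k : Fin (n+1)) (τ : ℍ), f k τ = 0 by
    intro k; ext τ; simpa using h k τ
  intro k τ
  set a : Fin (n+1) → ℂ := fun j => f j τ with ha
  have key : ∀ m : ℕ, ∑ j : Fin (n + 1), a j * ((m : ℂ) * τ + 1) ^ (j : ℕ) = 0 := by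
    intro m
    have hdet : (!![1, 0; (m : ℤ), 1] : Matrix (Fin 2) (Fin 2) ℤ).det = 1 := by
      simp [Matrix.det_fin_two_of]
    set γ : SL(2, ℤ) := ⟨!![1, 0; (m : ℤ), 1], hdet⟩ with hγ
    have h1 : ∀ j : Fin (n+1), f j (γ • τ) = ((m : ℂ) * τ + 1) ^ (j : ℕ) * a j := by
      intro j
      have := SlashInvariantForm.slash_action_eqn_SL'' (Γ := ⊤) (f j) (Subgroup.mem_top γ) τ
      simp only [denom, Matrix.SpecialLinearGroup.coe_GL_coe_matrix,
        Matrix.SpecialLinearGroup.map_apply_coe, RingHom.mapMatrix_apply] at this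
      simp only [hγ] at this
      rw [this]
      norm_num [Matrix.SpecialLinearGroup.coe_mk, zpow_natCast]
      exact Or.inl rfl
    have h2 := hsum (γ • τ)
    rw [Finset.sum_congr rfl fun j _ => h1 j] at h2
    simpa [mul_comm] using h2
  set p : ℂ[X] := ∑ j : Fin (n+1), C (a j) * X ^ (j : ℕ) with hp
  have hroots : ∀ m : ℕ, p.IsRoot ((m : ℂ) * τ + 1) := by
    intro m
    simp only [hp, IsRoot, eval_finset_sum, eval_mul, eval_C, eval_pow, eval_X]
    exact key m
  have hinj : Function.Injective (fun m : ℕ => (m : ℂ) * τ + 1) := by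
    intro m1 m2 h
    simp only [add_left_inj] at h
    have hτ : (τ : ℂ) ≠ 0 := ne_zero τ
    exact Nat.cast_injective (mul_right_cancel₀ hτ h)
  have hp0 : p = 0 :=
    p.eq_zero_of_infinite_isRoot
      (Set.infinite_of_injective_forall_mem hinj fun m => hroots m)
  have := congrArg (fun q : ℂ[X] => q.coeff (k : ℕ)) hp0
  simp only [hp, finset_sum_coeff, coeff_C_mul, coeff_X_pow, coeff_zero, mul_ite, mul_one,
    mul_zero, Fin.val_eq_val, Finset.sum_ite_eq, Finset.mem_univ, if_true] at this
  exact this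
end

section
/- For every even integer a ≥ 2, the crank moment generating functions satisfy the recurrence C_a = 2·Σ_{j=1}^{a/2 − 1} binom(a−1, 2j−1)·Φ_{2j−1}·C_{a−2j} + 2·Φ_{a−1}·P, as an identity of formal power series in ℚ[[q]]. -/
open PowerSeries Finset LaurentPolynomial

noncomputable section

/-- `p n` is the number of partitions of `n`. -/
def pcount (n : ℕ) : ℕ := Fintype.card (Nat.Partition n)

/-- The rank of a partition: its largest part minus its number of parts. -/
def rank {n : ℕ} (P : n.Partition) : ℤ :=
  (P.parts.sup : ℤ) - (Multiset.card P.parts : ℤ)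

/-- `N(m,n)`: the number of partitions of `n` with rank `m`. -/
def rankCount (m : ℤ) (n : ℕ) : ℕ := Nat.card {P : n.Partition // rank P = m}

/-- The factor `(1-q^k)/((1-z q^k)(1-z⁻¹ q^k))` of the crank generating function,
as a formal power series in `q` whose coefficients are Laurent polynomials in `z`
(over `ℤ`); the reciprocals are taken via `PowerSeries.invOfUnit`, using that the
constant coefficient of `1 - z q^k` (resp. `1 - z⁻¹ q^k`) is `1` for `k ≥ 1`. -/
def crankFactor (k : ℕ) : PowerSeries (LaurentPolynomial ℤ) :=
  (1 - (X : PowerSeries (LaurentPolynomial ℤ)) ^ k)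
    * PowerSeries.invOfUnit (1 - PowerSeries.C (T 1) * X ^ k) 1
    * PowerSeries.invOfUnit (1 - PowerSeries.C (T (-1)) * X ^ k) 1

/-- The coefficient of `q^n` in `C(z,q) = ∏_{k≥1} (1-q^k)/((1-z q^k)(1-z⁻¹ q^k))`,
a Laurent polynomial in `z`.  Since each factor with `k > n` is `1 + O(q^k)`, the
coefficient of `q^n` in the infinite product equals the coefficient of `q^n` in the
finite product over `1 ≤ k ≤ n`. -/
def crankCoeff (n : ℕ) : LaurentPolynomial ℤ :=
  PowerSeries.coeff n (∏ k ∈ Finset.Icc 1 n, crankFactor k)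

/-- `M(m,n)`: the coefficient of `z^m q^n` in the crank generating function. -/
def crankCount (m : ℤ) (n : ℕ) : ℤ := (crankCoeff n).coeff m

/-- The crank moment `M_j(n) = Σ_m m^j M(m,n)`, a finite sum over all integers `m`
(only finitely many `m` have `M(m,n) ≠ 0`). -/
def crankMoment (j : ℕ) (n : ℕ) : ℤ := (crankCoeff n).coeff.sum fun m a => m ^ j * a

/-- The rank moment `N_j(n) = Σ_m m^j N(m,n)`; grouping the partitions of `n`
according to their rank, this is `Σ_{P ⊢ n} (rank P)^j`. -/
def rankMoment (j : ℕ) (n : ℕ) : ℤ := ∑ P : n.Partition, (rank P) ^ j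

/-- `P = Σ_{n≥0} p(n) qⁿ ∈ ℚ[[q]]`. -/
def Pser : PowerSeries ℚ := PowerSeries.mk fun n => (pcount n : ℚ)

/-- `Φ_j = Σ_{n≥1} σ_j(n) qⁿ ∈ ℚ[[q]]`, where `σ_j(n) = Σ_{d ∣ n} d^j`. -/
def Phi (j : ℕ) : PowerSeries ℚ :=
  PowerSeries.mk fun n => if n = 0 then 0 else ∑ d ∈ n.divisors, (d : ℚ) ^ j

/-- `C_j = Σ_{n≥1} M_j(n) qⁿ ∈ ℚ[[q]]`. -/
def Cser (j : ℕ) : PowerSeries ℚ :=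
  PowerSeries.mk fun n => if n = 0 then 0 else (crankMoment j n : ℚ)


namespace AtkinGarvan

abbrev R := LaurentPolynomial ℤ

/-! ### The derivation `z d/dz` on Laurent polynomials -/

def dz (f : LaurentPolynomial ℤ) : LaurentPolynomial ℤ := f.coeff.sum fun m c => AddMonoidAlgebra.single m (m * c)

lemma dz_single (m c : ℤ) : dz (AddMonoidAlgebra.single m c) = AddMonoidAlgebra.single m (m * c) := by
  rw [dz, AddMonoidAlgebra.coeff_single, Finsupp.sum_single_index]; simp

lemma dz_zero : dz 0 = 0 := by simp [dz]

lemma dz_add (f g : LaurentPolynomial ℤ) : dz (f + g) = dz f + dz g := by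
  classical
  rw [dz, dz, dz, AddMonoidAlgebra.coeff_add]
  exact Finsupp.sum_add_index' (fun a => by simp) (fun a b₁ b₂ => by rw [mul_add, AddMonoidAlgebra.single_add])

lemma dz_mul (f g : LaurentPolynomial ℤ) : dz (f * g) = f * dz g + dz f * g := by
  classical
  induction f using AddMonoidAlgebra.induction_linear with
  | zero => simp [dz_zero]
  | add f₁ f₂ h1 h2 => rw [add_mul, dz_add, h1, h2, dz_add, add_mul]; ring
  | single a b =>
    induction g using AddMonoidAlgebra.induction_linear with
    | zero => simp [dz_zero]
    | add g₁ g₂ h1 h2 => rw [mul_add, dz_add, h1, h2, dz_add, mul_add]; ring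
    | single a' b' =>
      show dz (AddMonoidAlgebra.single a b * AddMonoidAlgebra.single a' b') = _
      rw [AddMonoidAlgebra.single_mul_single]
      show dz (AddMonoidAlgebra.single (a+a') (b*b')) = AddMonoidAlgebra.single a b * dz (AddMonoidAlgebra.single a' b')
        + dz (AddMonoidAlgebra.single a b) * AddMonoidAlgebra.single a' b'
      rw [dz_single, dz_single, dz_single]
      show (AddMonoidAlgebra.single (a+a') ((a+a')*(b*b')) : LaurentPolynomial ℤ) =
        AddMonoidAlgebra.single a b * AddMonoidAlgebra.single a' (a'*b')
        + AddMonoidAlgebra.single a (a*b) * AddMonoidAlgebra.single a' b'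
      rw [AddMonoidAlgebra.single_mul_single, AddMonoidAlgebra.single_mul_single,
        ← AddMonoidAlgebra.single_add]
      congr 1
      ring

lemma dz_iterate_single (j : ℕ) (m c : ℤ) :
    dz^[j] (AddMonoidAlgebra.single m c) = AddMonoidAlgebra.single m (m ^ j * c) := by
  induction j with
  | zero => simp
  | succ j ih => rw [Function.iterate_succ_apply', ih, dz_single, ← mul_assoc, ← pow_succ']

lemma dz_iterate_zero (j : ℕ) : dz^[j] 0 = 0 := by
  induction j with
  | zero => rfl
  | succ j ih => rw [Function.iterate_succ_apply', ih, dz_zero]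

lemma dz_iterate_add (j : ℕ) (f g : LaurentPolynomial ℤ) :
    dz^[j] (f + g) = dz^[j] f + dz^[j] g := by
  induction j generalizing f g with
  | zero => rfl
  | succ j ih => rw [Function.iterate_succ_apply, dz_add, ih, Function.iterate_succ_apply,
      Function.iterate_succ_apply]

lemma dz_iterate_sub (j : ℕ) (f g : LaurentPolynomial ℤ) :
    dz^[j] (f - g) = dz^[j] f - dz^[j] g := by
  have h := dz_iterate_add j (f - g) g
  rw [sub_add_cancel] at h
  rw [eq_sub_iff_add_eq, ← h]

/-- evaluation at `z = 1`. -/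
def eps : LaurentPolynomial ℤ →ₐ[ℤ] ℤ := AddMonoidAlgebra.lift ℤ ℤ ℤ 1

lemma eps_single (m c : ℤ) : eps (AddMonoidAlgebra.single m c) = c := by
  rw [eps]; erw [AddMonoidAlgebra.lift_single]; simp

lemma eps_dz_iterate (j : ℕ) (f : LaurentPolynomial ℤ) :
    eps (dz^[j] f) = f.coeff.sum fun m c => m ^ j * c := by
  classical
  induction f using AddMonoidAlgebra.induction_linear with
  | zero => simp [dz_iterate_zero]
  | add f g h1 h2 =>
    rw [dz_iterate_add, map_add, h1, h2, AddMonoidAlgebra.coeff_add,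
      Finsupp.sum_add_index' (fun a => by simp) (fun a b₁ b₂ => by ring)]
  | single a b =>
    rw [dz_iterate_single, eps_single, AddMonoidAlgebra.coeff_single, Finsupp.sum_single_index (by simp)]

lemma eps_dz_T (i : ℕ) (m : ℤ) : eps (dz^[i] (T m)) = m ^ i := by
  rw [T, dz_iterate_single, eps_single, mul_one]

lemma eps_T (m : ℤ) : eps (T m) = 1 := by
  have := eps_dz_T 0 m
  simpa using this

/-! ### The coefficientwise derivation on power series -/

def Dz (F : PowerSeries R) : PowerSeries R := PowerSeries.mk fun n => dz (PowerSeries.coeff n F)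

lemma coeff_Dz (n : ℕ) (F : PowerSeries R) :
    PowerSeries.coeff n (Dz F) = dz (PowerSeries.coeff n F) := coeff_mk _ _

lemma coeff_Dz_iterate (t n : ℕ) (F : PowerSeries R) :
    PowerSeries.coeff n (Dz^[t] F) = dz^[t] (PowerSeries.coeff n F) := by
  induction t generalizing F with
  | zero => rfl
  | succ t ih => rw [Function.iterate_succ_apply, ih, coeff_Dz, ← Function.iterate_succ_apply,
      Function.iterate_succ_apply']

lemma dz_sum {ι : Type*} (s : Finset ι) (f : ι → R) : dz (∑ i ∈ s, f i) = ∑ i ∈ s, dz (f i) := by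
  classical
  induction s using Finset.induction with
  | empty => simpa using dz_zero
  | insert _ _ h ih => rw [Finset.sum_insert h, Finset.sum_insert h, dz_add, ih]

lemma Dz_add (F G : PowerSeries R) : Dz (F + G) = Dz F + Dz G := by
  refine PowerSeries.ext fun n => ?_
  rw [coeff_Dz, map_add, map_add, coeff_Dz, coeff_Dz, dz_add]

lemma Dz_mul (F G : PowerSeries R) : Dz (F * G) = F * Dz G + Dz F * G := by
  refine PowerSeries.ext fun n => ?_
  rw [coeff_Dz, map_add, coeff_mul, coeff_mul, coeff_mul, dz_sum, ← Finset.sum_add_distrib]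
  refine Finset.sum_congr rfl fun p _ => ?_
  rw [dz_mul, coeff_Dz, coeff_Dz]

lemma Dz_zero : Dz (0 : PowerSeries R) = 0 := by
  refine PowerSeries.ext fun n => ?_
  rw [coeff_Dz]
  simpa using dz_zero

lemma Dz_one : Dz (1 : PowerSeries R) = 0 := by
  refine PowerSeries.ext fun n => ?_
  rw [coeff_Dz, ← map_one (PowerSeries.C (R := R))]
  rcases eq_or_ne n 0 with rfl | hn
  · rw [coeff_zero_C]
    have h1 : (1 : R) = AddMonoidAlgebra.single 0 1 := rfl
    rw [h1, dz_single]
    simp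
  · rw [coeff_C, if_neg hn, dz_zero]
    simp

lemma Dz_sub (F G : PowerSeries R) : Dz (F - G) = Dz F - Dz G := by
  have h := Dz_add (F - G) G
  rw [sub_add_cancel] at h
  rw [eq_sub_iff_add_eq, ← h]

/-- logarithmic-derivative product rule. -/
lemma Dz_prod {ι : Type*} (s : Finset ι) (f g : ι → PowerSeries R)
    (h : ∀ i ∈ s, Dz (f i) = g i * f i) :
    Dz (∏ i ∈ s, f i) = (∑ i ∈ s, g i) * ∏ i ∈ s, f i := by
  classical
  induction s using Finset.induction with
  | empty =>
    rw [Finset.prod_empty, Finset.sum_empty, zero_mul]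
    exact Dz_one
  | @insert i s hi ih =>
    rw [Finset.prod_insert hi, Dz_mul, ih (fun j hj => h j (Finset.mem_insert_of_mem hj)),
      h i (Finset.mem_insert_self i s), Finset.sum_insert hi]
    ring

lemma Dz_iterate_add (t : ℕ) (F G : PowerSeries R) :
    Dz^[t] (F + G) = Dz^[t] F + Dz^[t] G := by
  induction t generalizing F G with
  | zero => rfl
  | succ t ih => rw [Function.iterate_succ_apply, Dz_add, ih,
      Function.iterate_succ_apply, Function.iterate_succ_apply]

/-- iterated Leibniz rule. -/
lemma Dz_iterate_mul (t : ℕ) (F G : PowerSeries R) :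
    Dz^[t] (F * G) = ∑ i ∈ Finset.range (t + 1), (t.choose i) • (Dz^[i] F * Dz^[t - i] G) := by
  induction t generalizing F G with
  | zero => simp
  | succ t ih =>
    rw [Function.iterate_succ_apply, Dz_mul, Dz_iterate_add, ih, ih, ← Finset.sum_add_distrib]
    have key : ∀ i ∈ Finset.range (t + 1),
        (t.choose i) • (Dz^[i] F * Dz^[t - i] (Dz G)) + (t.choose i) • (Dz^[i] (Dz F) * Dz^[t - i] G)
        = (t.choose i) • (Dz^[i] F * Dz^[t + 1 - i] G)
          + (t.choose i) • (Dz^[i + 1] F * Dz^[t + 1 - (i + 1)] G) := by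
      intro i hi
      rw [Finset.mem_range] at hi
      congr 2
      · rw [← Function.iterate_succ_apply]
        congr 2
        omega
      · rw [Function.iterate_succ_apply]
        congr 2
        omega
    rw [Finset.sum_congr rfl key, Finset.sum_add_distrib]
    set u : ℕ → PowerSeries R := fun i => Dz^[i] F * Dz^[t + 1 - i] G with hu
    have e1 : ∑ i ∈ Finset.range (t + 2), t.choose i • u i
        = ∑ i ∈ Finset.range (t + 1), t.choose i • u i := by
      rw [Finset.sum_range_succ, Nat.choose_succ_self, zero_smul, add_zero]
    have e2 : ∑ i ∈ Finset.range (t + 2), t.choose i • u i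
        = ∑ i ∈ Finset.range (t + 1), t.choose (i + 1) • u (i + 1) + t.choose 0 • u 0 :=
      Finset.sum_range_succ' _ _
    symm
    calc ∑ i ∈ Finset.range (t + 2), (t + 1).choose i • u i
        = ∑ i ∈ Finset.range (t + 1), (t + 1).choose (i + 1) • u (i + 1) + (t + 1).choose 0 • u 0 :=
          Finset.sum_range_succ' _ _
      _ = ∑ i ∈ Finset.range (t + 1), (t.choose i • u (i + 1) + t.choose (i + 1) • u (i + 1))
            + t.choose 0 • u 0 := by
          simp only [Nat.choose_succ_succ, add_smul, Nat.choose_zero_right]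
      _ = ∑ i ∈ Finset.range (t + 1), t.choose i • u (i + 1)
            + (∑ i ∈ Finset.range (t + 1), t.choose (i + 1) • u (i + 1) + t.choose 0 • u 0) := by
          rw [Finset.sum_add_distrib, add_assoc]
      _ = ∑ i ∈ Finset.range (t + 1), t.choose i • u (i + 1)
            + ∑ i ∈ Finset.range (t + 1), t.choose i • u i := by rw [← e2, e1]
      _ = _ := by rw [add_comm]

/-! ### Explicit facts about the crank factors -/

lemma constCoeff_unit (r : R) (k : ℕ) (hk : 1 ≤ k) :
    constantCoeff (R := R) (1 - PowerSeries.C (R := R) r * X ^ k) = 1 := by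
  rw [map_sub, map_one, map_mul, map_pow, constantCoeff_X, zero_pow (by omega), mul_zero, sub_zero]

lemma unit_mul_inv (r : R) (k : ℕ) (hk : 1 ≤ k) :
    (1 - PowerSeries.C (R := R) r * X ^ k) * PowerSeries.invOfUnit (1 - PowerSeries.C (R := R) r * X ^ k) 1 = 1 :=
  PowerSeries.mul_invOfUnit _ 1 (by rw [constCoeff_unit r k hk, Units.val_one])

/-- geometric series formula for the inverse -/
lemma invOfUnit_geom (r : R) (k : ℕ) (hk : 1 ≤ k) :
    PowerSeries.invOfUnit (1 - PowerSeries.C (R := R) r * X ^ k) 1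
      = PowerSeries.mk fun n => if k ∣ n then r ^ (n / k) else 0 := by
  set S : PowerSeries R := PowerSeries.mk fun n => if k ∣ n then r ^ (n / k) else 0 with hS
  have key : (1 - PowerSeries.C (R := R) r * X ^ k) * S = 1 := by
    refine PowerSeries.ext fun n => ?_
    rw [sub_mul, one_mul, map_sub]
    rcases lt_or_ge n k with h | h
    · have h2 : PowerSeries.coeff (R := R) n (PowerSeries.C (R := R) r * X ^ k * S) = 0 := by
        have hdvd : (X : PowerSeries R) ^ k ∣ PowerSeries.C (R := R) r * X ^ k * S :=
          ⟨PowerSeries.C (R := R) r * S, by ring⟩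
        exact PowerSeries.X_pow_dvd_iff.mp hdvd n h
      rw [h2, sub_zero, hS, coeff_mk]
      rcases Nat.eq_zero_or_pos n with rfl | hn
      · simp
      · rw [if_neg (fun hd => absurd (Nat.le_of_dvd hn hd) (by omega)), coeff_one, if_neg (by omega)]
    · obtain ⟨d, rfl⟩ : ∃ d, n = d + k := ⟨n - k, by omega⟩
      have h2 : PowerSeries.coeff (R := R) (d + k) (PowerSeries.C (R := R) r * X ^ k * S)
          = r * PowerSeries.coeff (R := R) d S := by
        rw [mul_assoc, mul_comm ((X : PowerSeries R) ^ k) S, ← mul_assoc,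
          PowerSeries.coeff_mul_X_pow, coeff_C_mul]
      rw [h2, hS, coeff_mk, coeff_mk, coeff_one]
      have hne : ¬(d + k = 0) := by omega
      by_cases hd : k ∣ d
      · have h1 : k ∣ d + k := dvd_add hd dvd_rfl
        rw [if_pos h1, if_pos hd, if_neg hne, Nat.add_div_right d (by omega), pow_succ]
        ring
      · have h1 : ¬ k ∣ d + k := fun hc => hd (by simpa using Nat.dvd_sub hc dvd_rfl)
        rw [if_neg h1, if_neg hd, if_neg hne, mul_zero, sub_zero]
  have h1 := unit_mul_inv r k hk
  calc PowerSeries.invOfUnit (1 - PowerSeries.C (R := R) r * X ^ k) 1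
      = 1 * PowerSeries.invOfUnit (1 - PowerSeries.C (R := R) r * X ^ k) 1 := (one_mul _).symm
    _ = S * (1 - PowerSeries.C (R := R) r * X ^ k)
        * PowerSeries.invOfUnit (1 - PowerSeries.C (R := R) r * X ^ k) 1 := by
        rw [mul_comm S, key]
    _ = S * ((1 - PowerSeries.C (R := R) r * X ^ k)
        * PowerSeries.invOfUnit (1 - PowerSeries.C (R := R) r * X ^ k) 1) := mul_assoc _ _ _
    _ = S := by rw [h1, mul_one]

lemma dz_T' (m : ℤ) : dz (T m) = m • T m := by
  rw [T, dz_single, AddMonoidAlgebra.smul_single, smul_eq_mul, mul_one]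

lemma Dz_X_pow (k : ℕ) : Dz ((X : PowerSeries R) ^ k) = 0 := by
  refine PowerSeries.ext fun n => ?_
  rw [coeff_Dz, PowerSeries.coeff_X_pow]
  split_ifs with h
  · have h1 : (1 : R) = AddMonoidAlgebra.single 0 1 := rfl
    rw [h1, dz_single]; simp
  · rw [dz_zero]; simp

lemma Dz_C_mul_X_pow (r : R) (k : ℕ) :
    Dz (PowerSeries.C (R := R) r * X ^ k) = PowerSeries.C (R := R) (dz r) * X ^ k := by
  refine PowerSeries.ext fun n => ?_
  rw [coeff_Dz, coeff_C_mul_X_pow, coeff_C_mul_X_pow]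
  split_ifs with h
  · rfl
  · exact dz_zero

/-- derivative of the inverse factor -/
lemma Dz_invOfUnit (r : R) (k : ℕ) (hk : 1 ≤ k) :
    Dz (PowerSeries.invOfUnit (1 - PowerSeries.C (R := R) r * X ^ k) 1)
      = PowerSeries.C (R := R) (dz r) * X ^ k
        * PowerSeries.invOfUnit (1 - PowerSeries.C (R := R) r * X ^ k) 1
        * PowerSeries.invOfUnit (1 - PowerSeries.C (R := R) r * X ^ k) 1 := by
  set u := PowerSeries.invOfUnit (1 - PowerSeries.C (R := R) r * X ^ k) 1 with hu
  set w := 1 - PowerSeries.C (R := R) r * X ^ k with hw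
  have hmul : w * u = 1 := unit_mul_inv r k hk
  have hDw : Dz w = - (PowerSeries.C (R := R) (dz r) * X ^ k) := by
    rw [hw, Dz_sub, Dz_one, Dz_C_mul_X_pow, zero_sub]
  have h0 : w * Dz u + Dz w * u = 0 := by rw [← Dz_mul, hmul, Dz_one]
  have h1 : Dz u = u * (PowerSeries.C (R := R) (dz r) * X ^ k * u) := by
    have h2 : u * (w * Dz u) = u * (PowerSeries.C (R := R) (dz r) * X ^ k * u) := by
      rw [show w * Dz u = -(Dz w * u) by rw [eq_neg_iff_add_eq_zero]; exact h0, hDw]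
      ring
    rw [← h2, ← mul_assoc, mul_comm u w, hmul, one_mul]
  rw [h1]; ring

/-- the logarithmic derivative summand `g k`. -/
def gk (k : ℕ) : PowerSeries R :=
  PowerSeries.C (R := R) (T 1) * X ^ k * PowerSeries.invOfUnit (1 - PowerSeries.C (R := R) (T 1) * X ^ k) 1
  - PowerSeries.C (R := R) (T (-1)) * X ^ k
      * PowerSeries.invOfUnit (1 - PowerSeries.C (R := R) (T (-1)) * X ^ k) 1

lemma Dz_crankFactor (k : ℕ) (hk : 1 ≤ k) :
    Dz (crankFactor k) = gk k * crankFactor k := by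
  set u := PowerSeries.invOfUnit (1 - PowerSeries.C (R := R) (T 1) * X ^ k) 1 with hu
  set v := PowerSeries.invOfUnit (1 - PowerSeries.C (R := R) (T (-1)) * X ^ k) 1 with hv
  have hA : Dz (1 - (X : PowerSeries R) ^ k) = 0 := by
    rw [Dz_sub, Dz_one, Dz_X_pow, sub_zero]
  have hDu : Dz u = PowerSeries.C (R := R) (T 1) * X ^ k * u * u := by
    have h := Dz_invOfUnit (T 1) k hk
    rwa [dz_T', one_smul] at h
  have hDv : Dz v = - (PowerSeries.C (R := R) (T (-1)) * X ^ k * v * v) := by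
    have h := Dz_invOfUnit (T (-1)) k hk
    rw [dz_T'] at h
    rw [h]
    have h2 : (PowerSeries.C (R := R)) ((-1 : ℤ) • T (-1)) = - PowerSeries.C (R := R) (T (-1)) := by
      rw [neg_one_zsmul, map_neg]
    rw [h2]; ring
  rw [crankFactor, gk, ← hu, ← hv, Dz_mul, Dz_mul, hA, hDu, hDv]
  ring

/-- each factor is `1 + X^k * (stuff)`. -/
lemma crankFactor_sub_one (k : ℕ) (hk : 1 ≤ k) :
    ∃ s : PowerSeries R, crankFactor k = 1 + X ^ k * s := by
  set u := PowerSeries.invOfUnit (1 - PowerSeries.C (R := R) (T 1) * X ^ k) 1 with hu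
  set v := PowerSeries.invOfUnit (1 - PowerSeries.C (R := R) (T (-1)) * X ^ k) 1 with hv
  have h1 : u = 1 + X ^ k * (PowerSeries.C (R := R) (T 1) * u) := by
    have h := unit_mul_inv (T 1) k hk
    rw [sub_mul, one_mul, sub_eq_iff_eq_add] at h
    conv_lhs => rw [hu, h]
    ring
  have h2 : v = 1 + X ^ k * (PowerSeries.C (R := R) (T (-1)) * v) := by
    have h := unit_mul_inv (T (-1)) k hk
    rw [sub_mul, one_mul, sub_eq_iff_eq_add] at h
    conv_lhs => rw [hv, h]
    ring
  set p := PowerSeries.C (R := R) (T 1) * u with hp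
  set q := PowerSeries.C (R := R) (T (-1)) * v with hq
  refine ⟨p + q - 1 + X ^ k * (p * q - p - q) - X ^ k * X ^ k * (p * q), ?_⟩
  rw [crankFactor, ← hu, ← hv]
  conv_lhs => rw [h1, h2]
  ring

/-- truncation: for `m ≤ N` the coefficient stabilizes. -/
lemma coeff_prod_stable (m N : ℕ) (h : m ≤ N) :
    PowerSeries.coeff m (∏ k ∈ Finset.Icc 1 N, crankFactor k) = crankCoeff m := by
  induction N with
  | zero => interval_cases m; rfl
  | succ N ih =>
    rcases eq_or_lt_of_le h with rfl | hlt
    · rfl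
    · have hm : m ≤ N := by omega
      obtain ⟨s, hs⟩ := crankFactor_sub_one (N + 1) (by omega)
      rw [Finset.prod_Icc_succ_top (by omega), hs]
      have hre : (∏ k ∈ Finset.Icc 1 N, crankFactor k) * (1 + X ^ (N + 1) * s)
          = (∏ k ∈ Finset.Icc 1 N, crankFactor k)
            + X ^ (N + 1) * ((∏ k ∈ Finset.Icc 1 N, crankFactor k) * s) := by ring
      rw [hre, map_add, ih hm,
        PowerSeries.X_pow_dvd_iff.mp (dvd_mul_right _ _) m hlt, add_zero]

/-- coefficients of `g k`. -/
lemma coeff_gk (k : ℕ) (hk : 1 ≤ k) (q : ℕ) :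
    PowerSeries.coeff q (gk k)
      = if k ∣ q ∧ q ≠ 0 then T ((q / k : ℕ) : ℤ) - T (-((q / k : ℕ) : ℤ)) else 0 := by
  have coeff_W : ∀ r : R, PowerSeries.coeff q
      (PowerSeries.C (R := R) r * X ^ k * PowerSeries.invOfUnit (1 - PowerSeries.C (R := R) r * X ^ k) 1)
      = if k ∣ q ∧ q ≠ 0 then r ^ (q / k) else 0 := by
    intro r
    rw [invOfUnit_geom r k hk]
    rcases lt_or_ge q k with h | h
    · have h2 : PowerSeries.coeff (R := R) q (PowerSeries.C (R := R) r * X ^ k *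
          PowerSeries.mk fun n => if k ∣ n then r ^ (n / k) else 0) = 0 :=
        PowerSeries.X_pow_dvd_iff.mp ⟨PowerSeries.C (R := R) r *
          PowerSeries.mk fun n => if k ∣ n then r ^ (n / k) else 0, by ring⟩ q h
      rw [h2]
      rcases Nat.eq_zero_or_pos q with rfl | hq
      · rw [if_neg (by simp)]
      · rw [if_neg (fun hd => absurd (Nat.le_of_dvd hq hd.1) (by omega))]
    · obtain ⟨d, rfl⟩ : ∃ d, q = d + k := ⟨q - k, by omega⟩
      rw [mul_assoc, mul_comm ((X : PowerSeries R) ^ k), ← mul_assoc,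
        PowerSeries.coeff_mul_X_pow, coeff_C_mul, coeff_mk]
      by_cases hd : k ∣ d
      · rw [if_pos hd, if_pos ⟨dvd_add hd dvd_rfl, by omega⟩, Nat.add_div_right d (by omega),
          pow_succ]
        ring
      · rw [if_neg hd, mul_zero,
          if_neg (fun hc => hd (by simpa using Nat.dvd_sub hc.1 dvd_rfl))]
  rw [gk, map_sub, coeff_W, coeff_W]
  split_ifs with h
  · rw [LaurentPolynomial.T_pow, LaurentPolynomial.T_pow, mul_one, mul_neg_one]
  · rw [sub_zero]

/-! ### mapping to `ℚ` -/

def rho : R →+* ℚ := (Int.castRingHom ℚ).comp eps.toRingHom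

lemma rho_T (m : ℤ) : rho (T m) = 1 := by
  simp [rho, eps_T]

lemma dz_iterate_sum {ι : Type*} (i : ℕ) (s : Finset ι) (f : ι → R) :
    dz^[i] (∑ k ∈ s, f k) = ∑ k ∈ s, dz^[i] (f k) := by
  classical
  induction s using Finset.induction with
  | empty => simpa using dz_iterate_zero i
  | insert _ _ h ih => rw [Finset.sum_insert h, Finset.sum_insert h, dz_iterate_add, ih]

lemma rho_dz_T (i : ℕ) (m : ℤ) : rho (dz^[i] (T m)) = (m : ℚ) ^ i := by
  have h : rho (dz^[i] (T m)) = ((eps (dz^[i] (T m)) : ℤ) : ℚ) := rfl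
  rw [h, eps_dz_T]
  push_cast
  rfl

/-- `Φ`-side computation: the `q`-th coefficient of `ρ(dz^[i] G)`. -/
lemma rho_dz_G (i q n : ℕ) (hq : q ≤ n) (hi : Odd i) :
    (rho (dz^[i] (PowerSeries.coeff q (∑ k ∈ Finset.Icc 1 n, gk k)))) =
      2 * (PowerSeries.coeff (R := ℚ) q (Phi i)) := by
  have e : rho (dz^[i] (PowerSeries.coeff q (∑ k ∈ Finset.Icc 1 n, gk k)))
      = ∑ k ∈ Finset.Icc 1 n, rho (dz^[i] (PowerSeries.coeff q (gk k))) := by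
    rw [map_sum, dz_iterate_sum, map_sum]
  rcases Nat.eq_zero_or_pos q with rfl | hq0
  · have e0 : ∀ k ∈ Finset.Icc 1 n, rho (dz^[i] (PowerSeries.coeff 0 (gk k))) = 0 := by
      intro k hk
      rw [coeff_gk k (Finset.mem_Icc.mp hk).1, if_neg (by simp), dz_iterate_zero, map_zero]
    rw [e, Finset.sum_eq_zero e0, Phi, coeff_mk, if_pos rfl, mul_zero]
  · have hdiv : q.divisors = Finset.filter (fun k => k ∣ q) (Finset.Icc 1 n) := by
      ext k
      simp only [Nat.mem_divisors, Finset.mem_Icc, Finset.mem_filter]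
      constructor
      · rintro ⟨hk, -⟩
        exact ⟨⟨Nat.pos_of_dvd_of_pos hk hq0, le_trans (Nat.le_of_dvd hq0 hk) hq⟩, hk⟩
      · rintro ⟨-, hk⟩
        exact ⟨hk, by omega⟩
    have e1 : ∀ k ∈ Finset.Icc 1 n, rho (dz^[i] (PowerSeries.coeff q (gk k)))
        = if k ∣ q then 2 * ((q / k : ℕ) : ℚ) ^ i else 0 := by
      intro k hk
      rw [coeff_gk k (Finset.mem_Icc.mp hk).1]
      by_cases hkq : k ∣ q
      · rw [if_pos ⟨hkq, by omega⟩, if_pos hkq, dz_iterate_sub, map_sub, rho_dz_T, rho_dz_T,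
          Int.cast_neg, hi.neg_pow, sub_neg_eq_add, Int.cast_natCast]
        ring
      · rw [if_neg (fun hc => hkq hc.1), if_neg hkq, dz_iterate_zero, map_zero]
    rw [e, Finset.sum_congr rfl e1, ← Finset.sum_filter, ← hdiv]
    have e2 : ∑ k ∈ q.divisors, 2 * ((q / k : ℕ) : ℚ) ^ i
        = 2 * ∑ k ∈ q.divisors, ((q / k : ℕ) : ℚ) ^ i := by rw [Finset.mul_sum]
    rw [e2, Nat.sum_div_divisors q (fun d => ((d : ℕ) : ℚ) ^ i), Phi, coeff_mk, if_neg (by omega)]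

/-- even moments of `G` vanish. -/
lemma rho_dz_G_even (i q n : ℕ) (hi : Even i) :
    (rho (dz^[i] (PowerSeries.coeff q (∑ k ∈ Finset.Icc 1 n, gk k)))) = 0 := by
  have e : rho (dz^[i] (PowerSeries.coeff q (∑ k ∈ Finset.Icc 1 n, gk k)))
      = ∑ k ∈ Finset.Icc 1 n, rho (dz^[i] (PowerSeries.coeff q (gk k))) := by
    rw [map_sum, dz_iterate_sum, map_sum]
  rw [e]
  refine Finset.sum_eq_zero fun k hk => ?_
  rw [coeff_gk k (Finset.mem_Icc.mp hk).1]
  split_ifs with h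
  · rw [dz_iterate_sub, map_sub, rho_dz_T, rho_dz_T, Int.cast_neg, hi.neg_pow, sub_self]
  · rw [dz_iterate_zero, map_zero]


/-! ### moments -/

lemma crankMoment_eq (j m : ℕ) : crankMoment j m = eps (dz^[j] (crankCoeff m)) :=
  (eps_dz_iterate j _).symm

lemma crankCoeff_zero : crankCoeff 0 = 1 := by
  have h : Finset.Icc 1 0 = (∅ : Finset ℕ) := rfl
  rw [crankCoeff, h, Finset.prod_empty, coeff_zero_eq_constantCoeff, map_one]

lemma crankMoment_zero (j : ℕ) (hj : 1 ≤ j) : crankMoment j 0 = 0 := by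
  rw [crankMoment_eq, crankCoeff_zero]
  have h1 : (1 : R) = AddMonoidAlgebra.single 0 1 := rfl
  rw [h1, dz_iterate_single, zero_pow (by omega), zero_mul, AddMonoidAlgebra.single_zero, map_zero]

/-! ### partition generating function (adapted from Archive/Wiedijk100Theorems/Partition.lean) -/

section PartitionGF
open scoped Classical
open Finset.HasAntidiagonal
variable {α : Type*}

/-- A convenience constructor for the power series whose coefficients indicate a subset. -/
def indicatorSeries (α : Type*) [Semiring α] (s : Set ℕ) : PowerSeries α :=
  PowerSeries.mk fun n => if n ∈ s then 1 else 0

theorem coeff_indicator (s : Set ℕ) [Semiring α] (n : ℕ) :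
    coeff (R := α) n (indicatorSeries _ s) = if n ∈ s then 1 else 0 :=
  coeff_mk _ _

theorem coeff_indicator_pos (s : Set ℕ) [Semiring α] (n : ℕ) (h : n ∈ s) :
    coeff (R := α) n (indicatorSeries _ s) = 1 := by rw [coeff_indicator, if_pos h]

theorem coeff_indicator_neg (s : Set ℕ) [Semiring α] (n : ℕ) (h : n ∉ s) :
    coeff (R := α) n (indicatorSeries _ s) = 0 := by rw [coeff_indicator, if_neg h]

theorem constantCoeff_indicator (s : Set ℕ) [Semiring α] :
    constantCoeff (R := α) (indicatorSeries _ s) = if 0 ∈ s then 1 else 0 :=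
  rfl

theorem num_series' [Field α] (i : ℕ) :
    (1 - (X : PowerSeries α) ^ (i + 1))⁻¹ = indicatorSeries α {k | i + 1 ∣ k} := by
  rw [PowerSeries.inv_eq_iff_mul_eq_one]
  · ext n
    cases n with
    | zero => simp [mul_sub, zero_pow, constantCoeff_indicator]
    | succ n =>
      simp only [coeff_one, if_false, mul_sub, mul_one, coeff_indicator,
        LinearMap.map_sub, reduceCtorEq]
      simp_rw [coeff_mul, coeff_X_pow, coeff_indicator, @boole_mul _ _ _ _]
      rw [Finset.sum_congr rfl (g := fun x : ℕ × ℕ => if i + 1 ∣ x.1 ∧ x.2 = i + 1 then (1 : α) else 0)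
        (fun x _ => by split_ifs <;> simp_all), sum_boole, sub_eq_zero]
      symm
      split_ifs with h
      · suffices #{a ∈ antidiagonal (n + 1) | i + 1 ∣ a.fst ∧ a.snd = i + 1} = 1 by
          convert congr_arg ((↑) : ℕ → α) this; norm_cast
        rw [card_eq_one]
        cases' h with p hp
        refine ⟨((i + 1) * (p - 1), i + 1), ?_⟩
        ext ⟨a₁, a₂⟩
        simp only [mem_filter, Prod.mk.injEq, HasAntidiagonal.mem_antidiagonal, mem_singleton]
        constructor
        · rintro ⟨a_left, ⟨a, rfl⟩, rfl⟩
          refine ⟨?_, rfl⟩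
          rw [Nat.mul_sub_left_distrib, ← hp, ← a_left, mul_one, Nat.add_sub_cancel]
        · rintro ⟨rfl, rfl⟩
          match p with
          | 0 => rw [mul_zero] at hp; cases hp
          | p + 1 => rw [hp]; simp [mul_add]
      · suffices #{a ∈ antidiagonal (n + 1) | i + 1 ∣ a.fst ∧ a.snd = i + 1} = 0 by
          convert congr_arg ((↑) : ℕ → α) this; norm_cast
        rw [card_eq_zero]
        apply eq_empty_of_forall_notMem
        simp only [Prod.forall, mem_filter, not_and, HasAntidiagonal.mem_antidiagonal]
        rintro _ h₁ h₂ ⟨a, rfl⟩ rfl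
        apply h
        simp [← h₂]
  · simp [zero_pow]

-- The main workhorse of the partition theorem proof.
theorem partialGF_prop (α : Type*) [CommSemiring α] (n : ℕ) (s : Finset ℕ) (hs : ∀ i ∈ s, 0 < i)
    (c : ℕ → Set ℕ) (hc : ∀ i, i ∉ s → 0 ∈ c i) :
    #{p : n.Partition | (∀ j, p.parts.count j ∈ c j) ∧ ∀ j ∈ p.parts, j ∈ s} =
      coeff (R := α) n (∏ i ∈ s, indicatorSeries α ((· * i) '' c i)) := by
  simp_rw [coeff_prod, coeff_indicator, prod_boole, sum_boole]
  apply congr_arg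
  simp only [mem_univ, forall_true_left, not_and, not_forall, exists_prop,
    Set.mem_image, not_exists]
  set φ : (a : Nat.Partition n) →
    a ∈ filter (fun p ↦ (∀ (j : ℕ), Multiset.count j p.parts ∈ c j) ∧ ∀ j ∈ p.parts, j ∈ s) univ →
    ℕ →₀ ℕ := fun p _ => {
      toFun := fun i => Multiset.count i p.parts • i
      support := Finset.filter (fun i => i ≠ 0) p.parts.toFinset
      mem_support_toFun := fun a => by
        simp only [smul_eq_mul, ne_eq, mul_eq_zero, Multiset.count_eq_zero]
        rw [not_or, not_not]
        simp only [Multiset.mem_toFinset, not_not, mem_filter] }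
  refine Finset.card_bij φ ?_ ?_ ?_
  · intro a ha
    simp only [φ, not_forall, not_exists, not_and, exists_prop, mem_filter]
    rw [mem_finsuppAntidiag]
    dsimp only [ne_eq, smul_eq_mul, id_eq, eq_mpr_eq_cast, le_eq_subset, Finsupp.coe_mk]
    simp only [mem_univ, forall_true_left, not_and, not_forall, exists_prop,
      mem_filter, true_and] at ha
    refine ⟨⟨?_, fun i ↦ ?_⟩, fun i _ ↦ ⟨a.parts.count i, ha.1 i, rfl⟩⟩
    · conv_rhs => simp [← a.parts_sum]
      rw [sum_multiset_count_of_subset _ s]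
      · simp only [smul_eq_mul]
      · intro i
        simp only [Multiset.mem_toFinset, not_not, mem_filter]
        apply ha.2
    · simp only [ne_eq, Multiset.mem_toFinset, not_not, mem_filter, and_imp]
      exact fun hi _ ↦ ha.2 i hi
  · intro p₁ hp₁ p₂ hp₂ h
    apply Nat.Partition.ext
    simp only [true_and, mem_univ, mem_filter] at hp₁ hp₂
    ext i
    simp only [φ, ne_eq, Multiset.mem_toFinset, not_not, smul_eq_mul, Finsupp.mk.injEq] at h
    by_cases hi : i = 0
    · rw [hi]
      rw [Multiset.count_eq_zero_of_notMem]
      · rw [Multiset.count_eq_zero_of_notMem]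
        intro a; exact Nat.lt_irrefl 0 (hs 0 (hp₂.2 0 a))
      intro a; exact Nat.lt_irrefl 0 (hs 0 (hp₁.2 0 a))
    · rw [← mul_left_inj' hi]
      rw [funext_iff] at h
      exact h.2 i
  · simp only [φ, mem_filter, mem_finsuppAntidiag, mem_univ, exists_prop, true_and, and_assoc]
    rintro f ⟨hf, hf₃, hf₄⟩
    have hf' : f ∈ finsuppAntidiag s n := mem_finsuppAntidiag.mpr ⟨hf, hf₃⟩
    simp only [mem_finsuppAntidiag] at hf'
    refine ⟨⟨∑ i ∈ s, Multiset.replicate (f i / i) i, ?_, ?_⟩, ?_, ?_, ?_⟩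
    · intro i hi
      simp only [exists_prop, Multiset.mem_sum, mem_map, Function.Embedding.coeFn_mk] at hi
      rcases hi with ⟨t, ht, z⟩
      apply hs
      rwa [Multiset.eq_of_mem_replicate z]
    · simp_rw [Multiset.sum_sum, Multiset.sum_replicate, Nat.nsmul_eq_mul]
      rw [← hf'.1]
      refine sum_congr rfl fun i hi => Nat.div_mul_cancel ?_
      rcases hf₄ i hi with ⟨w, _, hw₂⟩
      rw [← hw₂]
      exact dvd_mul_left _ _
    · intro i
      simp_rw [Multiset.count_sum', Multiset.count_replicate, sum_ite_eq']
      split_ifs with h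
      · rcases hf₄ i h with ⟨w, hw₁, hw₂⟩
        rwa [← hw₂, Nat.mul_div_cancel _ (hs i h)]
      · exact hc _ h
    · intro i hi
      rw [Multiset.mem_sum] at hi
      rcases hi with ⟨j, hj₁, hj₂⟩
      rwa [Multiset.eq_of_mem_replicate hj₂]
    · ext i
      simp_rw [Multiset.count_sum', Multiset.count_replicate, sum_ite_eq']
      simp only [ne_eq, Multiset.mem_toFinset, not_not, smul_eq_mul, ite_mul,
        zero_mul, Finsupp.coe_mk]
      split_ifs with h
      · apply Nat.div_mul_cancel
        rcases hf₄ i h with ⟨w, _, hw₂⟩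
        apply Dvd.intro_left _ hw₂
      · apply symm
        rw [← Finsupp.notMem_support_iff]
        exact notMem_mono hf'.2 h



lemma pcount_eq (m n : ℕ) (hm : m ≤ n) :
    (pcount m : ℚ) = PowerSeries.coeff (R := ℚ) m (∏ i ∈ Finset.Icc 1 n, (1 - (X : PowerSeries ℚ) ^ i)⁻¹) := by
  have hs : ∀ i ∈ Finset.Icc 1 n, 0 < i := fun i hi => (Finset.mem_Icc.mp hi).1
  have h := partialGF_prop ℚ m (Finset.Icc 1 n) hs (fun _ => Set.univ) (fun _ _ => trivial)
  have hcard : Finset.filter (fun p : m.Partition =>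
      (∀ j, p.parts.count j ∈ (fun _ => Set.univ : ℕ → Set ℕ) j) ∧ ∀ j ∈ p.parts, j ∈ Finset.Icc 1 n)
        Finset.univ = Finset.univ := by
    refine Finset.filter_true_of_mem fun p _ =>
      ⟨fun j => trivial, fun j hj => Finset.mem_Icc.mpr ⟨p.parts_pos hj, ?_⟩⟩
    have h2 : j ≤ p.parts.sum := Multiset.single_le_sum (fun x _ => Nat.zero_le x) j hj
    rw [p.parts_sum] at h2
    omega
  have hprod : ∀ i ∈ Finset.Icc 1 n,
      indicatorSeries ℚ ((· * i) '' Set.univ) = (1 - (X : PowerSeries ℚ) ^ i)⁻¹ := by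
    intro i hi
    have hi1 := (Finset.mem_Icc.mp hi).1
    obtain ⟨j, rfl⟩ : ∃ j, i = j + 1 := ⟨i - 1, by omega⟩
    rw [num_series']
    have hset : ((· * (j + 1)) '' Set.univ) = {k | j + 1 ∣ k} := by
      ext k
      constructor
      · rintro ⟨c, -, rfl⟩
        exact Dvd.intro_left c rfl
      · rintro ⟨c, rfl⟩
        exact ⟨c, Set.mem_univ c, mul_comm _ _⟩
    rw [hset]
  calc (pcount m : ℚ)
      = ((Finset.filter (fun p : m.Partition =>
          (∀ j, p.parts.count j ∈ (fun _ => Set.univ : ℕ → Set ℕ) j) ∧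
            ∀ j ∈ p.parts, j ∈ Finset.Icc 1 n) Finset.univ).card : ℚ) := by
        rw [hcard, Finset.card_univ]; rfl
    _ = PowerSeries.coeff (R := ℚ) m (∏ i ∈ Finset.Icc 1 n, indicatorSeries ℚ ((· * i) '' Set.univ)) := h
    _ = _ := by rw [Finset.prod_congr rfl hprod]

end PartitionGF

/-! ### mapping the crank product to `ℚ` -/

lemma map_rho_inv (r : R) (hr : rho r = 1) (k : ℕ) (hk : 1 ≤ k) :
    PowerSeries.map rho (PowerSeries.invOfUnit (1 - PowerSeries.C (R := R) r * X ^ k) 1)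
      = (1 - (X : PowerSeries ℚ) ^ k)⁻¹ := by
  have h0 : constantCoeff (R := ℚ) (1 - (X : PowerSeries ℚ) ^ k) ≠ 0 := by
    rw [map_sub, map_one, map_pow, constantCoeff_X, zero_pow (by omega), sub_zero]
    exact one_ne_zero
  rw [eq_comm, PowerSeries.inv_eq_iff_mul_eq_one h0]
  have h := congrArg (PowerSeries.map rho) (unit_mul_inv r k hk)
  rw [map_mul, map_one] at h
  have h2 : PowerSeries.map rho (1 - PowerSeries.C (R := R) r * X ^ k) = 1 - (X : PowerSeries ℚ) ^ k := by
    rw [map_sub, map_one, map_mul, PowerSeries.map_C, hr, map_pow, PowerSeries.map_X, map_one,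
      one_mul]
  rw [h2] at h
  rw [mul_comm] at h
  exact h

lemma map_rho_crankFactor (k : ℕ) (hk : 1 ≤ k) :
    PowerSeries.map rho (crankFactor k) = (1 - (X : PowerSeries ℚ) ^ k)⁻¹ := by
  have h0 : constantCoeff (R := ℚ) (1 - (X : PowerSeries ℚ) ^ k) ≠ 0 := by
    rw [map_sub, map_one, map_pow, constantCoeff_X, zero_pow (by omega), sub_zero]
    exact one_ne_zero
  rw [crankFactor, map_mul, map_mul, map_rho_inv _ (rho_T 1) k hk, map_rho_inv _ (rho_T (-1)) k hk]
  have h2 : PowerSeries.map rho (1 - X ^ k) = 1 - (X : PowerSeries ℚ) ^ k := by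
    rw [map_sub, map_one, map_pow, PowerSeries.map_X]
  rw [h2, PowerSeries.mul_inv_cancel _ h0, one_mul]

lemma rho_crankCoeff (m : ℕ) : rho (crankCoeff m) = (pcount m : ℚ) := by
  have h1 : rho (crankCoeff m)
      = PowerSeries.coeff (R := ℚ) m (PowerSeries.map rho (∏ k ∈ Finset.Icc 1 m, crankFactor k)) := by
    rw [PowerSeries.coeff_map]
    rfl
  rw [h1, map_prod, Finset.prod_congr rfl (fun k hk =>
    map_rho_crankFactor k (Finset.mem_Icc.mp hk).1), ← pcount_eq m m le_rfl]


end AtkinGarvan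

/-- The recurrence `C_a = 2 Σ_{j=1}^{a/2-1} binom(a-1,2j-1) Φ_{2j-1} C_{a-2j} + 2 Φ_{a-1} P`
for every even `a ≥ 2`. -/
theorem stmt_7 (a : ℕ) (ha : Even a) (ha2 : 2 ≤ a) :
    Cser a =
      2 * (∑ j ∈ Finset.Icc 1 (a / 2 - 1),
            ((a - 1).choose (2 * j - 1) : PowerSeries ℚ) * (Phi (2 * j - 1) * Cser (a - 2 * j)))
        + 2 * (Phi (a - 1) * Pser) := by
  classical
  open AtkinGarvan in
  have haeven : a % 2 = 0 := Nat.even_iff.mp ha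
  have h2C : ∀ x : PowerSeries ℚ, ∀ n : ℕ,
      PowerSeries.coeff (R := ℚ) n (2 * x) = 2 * PowerSeries.coeff (R := ℚ) n x := fun x n => by
    rw [show (2 : PowerSeries ℚ) = PowerSeries.C (R := ℚ) 2 from (map_ofNat (PowerSeries.C (R := ℚ)) 2).symm,
      coeff_C_mul]
  have hNC : ∀ (c : ℕ) (x : PowerSeries ℚ) (n : ℕ),
      PowerSeries.coeff (R := ℚ) n ((c : PowerSeries ℚ) * x) = (c : ℚ) * PowerSeries.coeff (R := ℚ) n x :=
    fun c x n => by
      rw [show ((c : ℕ) : PowerSeries ℚ) = PowerSeries.C (R := ℚ) (c : ℚ) from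
        (map_natCast (PowerSeries.C (R := ℚ)) c).symm, coeff_C_mul]
  have hPhi0 : ∀ j : ℕ, PowerSeries.coeff (R := ℚ) 0 (Phi j) = 0 := fun j => by
    rw [Phi, coeff_mk, if_pos rfl]
  refine PowerSeries.ext fun n => ?_
  rcases Nat.eq_zero_or_pos n with rfl | hn
  · -- constant coefficients vanish on both sides
    rw [Cser, coeff_mk, if_pos rfl, map_add, h2C, h2C, map_sum]
    rw [Finset.sum_eq_zero fun j _ => ?_, mul_zero, zero_add]
    · rw [PowerSeries.coeff_zero_eq_constantCoeff, map_mul,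
        ← PowerSeries.coeff_zero_eq_constantCoeff, hPhi0, zero_mul, mul_zero]
    · rw [hNC, PowerSeries.coeff_zero_eq_constantCoeff, map_mul,
        ← PowerSeries.coeff_zero_eq_constantCoeff, hPhi0, zero_mul, mul_zero]
  · set b := a - 1 with hb
    have hb1 : b + 1 = a := by omega
    have hbodd : Odd b := ⟨a / 2 - 1, by omega⟩
    set F := ∏ k ∈ Finset.Icc 1 n, crankFactor k with hF
    set G := ∑ k ∈ Finset.Icc 1 n, gk k with hG
    have hcc : crankCoeff n = PowerSeries.coeff n F := rfl
    have hDzF : Dz F = G * F :=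
      Dz_prod _ _ _ (fun k hk => Dz_crankFactor k (Finset.mem_Icc.mp hk).1)
    have hiter : Dz^[a] F = ∑ i ∈ Finset.range a, (b.choose i) • (Dz^[i] G * Dz^[b - i] F) := by
      have h1 : Dz^[a] F = Dz^[b] (Dz F) := by rw [← hb1, Function.iterate_succ_apply]
      rw [h1, hDzF, Dz_iterate_mul, hb1]
    have hL : PowerSeries.coeff (R := ℚ) n (Cser a) = rho (dz^[a] (PowerSeries.coeff n F)) := by
      rw [Cser, coeff_mk, if_neg hn.ne']
      rw [show crankMoment a n = eps (dz^[a] (PowerSeries.coeff n F)) from crankMoment_eq a n]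
      rfl
    have hcoeff : rho (dz^[a] (PowerSeries.coeff n F)) = ∑ i ∈ Finset.range a,
        (b.choose i : ℚ) * rho (PowerSeries.coeff n (Dz^[i] G * Dz^[b - i] F)) := by
      rw [← coeff_Dz_iterate, hiter, map_sum, map_sum]
      refine Finset.sum_congr rfl fun i hi => ?_
      rw [map_nsmul, map_nsmul, nsmul_eq_mul]
    -- evaluation of the two kinds of coefficient factors
    have hFm : ∀ j m : ℕ, 1 ≤ j → m ≤ n →
        rho (dz^[j] (PowerSeries.coeff m F)) = PowerSeries.coeff (R := ℚ) m (Cser j) := by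
      intro j m hj hm
      rw [hF, coeff_prod_stable m n hm]
      rw [show rho (dz^[j] (crankCoeff m)) = ((crankMoment j m : ℤ) : ℚ) from by
        rw [crankMoment_eq]; rfl]
      rw [Cser, coeff_mk]
      rcases Nat.eq_zero_or_pos m with rfl | hm0
      · rw [if_pos rfl, crankMoment_zero j hj, Int.cast_zero]
      · rw [if_neg hm0.ne']
    have hF0 : ∀ m : ℕ, m ≤ n → rho (PowerSeries.coeff m F) = PowerSeries.coeff (R := ℚ) m Pser := by
      intro m hm
      rw [hF, coeff_prod_stable m n hm, rho_crankCoeff, Pser, coeff_mk]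
    have hodd_term : ∀ i : ℕ, Odd i → i ≤ b →
        rho (PowerSeries.coeff n (Dz^[i] G * Dz^[b - i] F))
          = 2 * PowerSeries.coeff (R := ℚ) n (Phi i * (if i = b then Pser else Cser (b - i))) := by
      intro i hio hib
      rw [coeff_mul, map_sum, coeff_mul, Finset.mul_sum]
      refine Finset.sum_congr rfl fun p hp => ?_
      have hp' := Finset.HasAntidiagonal.mem_antidiagonal.mp hp
      have h1 : rho (PowerSeries.coeff p.1 (Dz^[i] G)) = 2 * PowerSeries.coeff (R := ℚ) p.1 (Phi i) := by
        rw [coeff_Dz_iterate, hG]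
        exact rho_dz_G i p.1 n (by omega) hio
      have h2 : rho (PowerSeries.coeff p.2 (Dz^[b - i] F))
          = PowerSeries.coeff (R := ℚ) p.2 (if i = b then Pser else Cser (b - i)) := by
        by_cases hib' : i = b
        · subst hib'
          rw [if_pos rfl, Nat.sub_self]
          exact hF0 p.2 (by omega)
        · rw [if_neg hib', coeff_Dz_iterate]
          exact hFm (b - i) p.2 (by omega) (by omega)
      rw [map_mul, h1, h2]
      ring
    have heven_term : ∀ i : ℕ, Even i →
        rho (PowerSeries.coeff n (Dz^[i] G * Dz^[b - i] F)) = 0 := by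
      intro i hie
      rw [coeff_mul, map_sum]
      refine Finset.sum_eq_zero fun p hp => ?_
      rw [map_mul, coeff_Dz_iterate, hG, rho_dz_G_even i p.1 n hie, zero_mul]
    -- assemble
    have hstep : ∑ i ∈ Finset.range a,
        (b.choose i : ℚ) * rho (PowerSeries.coeff n (Dz^[i] G * Dz^[b - i] F))
        = ∑ i ∈ Finset.range a, (if Odd i then
            (b.choose i : ℚ) * (2 * PowerSeries.coeff (R := ℚ) n
              (Phi i * (if i = b then Pser else Cser (b - i)))) else 0) := by
      refine Finset.sum_congr rfl fun i hi => ?_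
      have hia : i < a := Finset.mem_range.mp hi
      by_cases hio : Odd i
      · rw [if_pos hio, hodd_term i hio (by omega)]
      · rw [if_neg hio, heven_term i (Nat.not_odd_iff_even.mp hio), mul_zero]
    have hfilter : ∑ i ∈ Finset.range a, (if Odd i then
            (b.choose i : ℚ) * (2 * PowerSeries.coeff (R := ℚ) n
              (Phi i * (if i = b then Pser else Cser (b - i)))) else 0)
        = ∑ i ∈ (Finset.range a).filter (fun i => Odd i),
            (b.choose i : ℚ) * (2 * PowerSeries.coeff (R := ℚ) n
              (Phi i * (if i = b then Pser else Cser (b - i)))) :=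
      (Finset.sum_filter _ _).symm
    have hreindex : ∑ i ∈ (Finset.range a).filter (fun i => Odd i),
            (b.choose i : ℚ) * (2 * PowerSeries.coeff (R := ℚ) n
              (Phi i * (if i = b then Pser else Cser (b - i))))
        = ∑ j ∈ Finset.Icc 1 (a / 2),
            (b.choose (2 * j - 1) : ℚ) * (2 * PowerSeries.coeff (R := ℚ) n
              (Phi (2 * j - 1) * (if 2 * j - 1 = b then Pser else Cser (b - (2 * j - 1))))) := by
      refine Finset.sum_nbij' (fun i => (i + 1) / 2) (fun j => 2 * j - 1) ?_ ?_ ?_ ?_ ?_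
      · intro x hx
        obtain ⟨hx1, hx2⟩ := Finset.mem_filter.mp hx
        have hx1' := Finset.mem_range.mp hx1
        have hx2' := Nat.odd_iff.mp hx2
        exact Finset.mem_Icc.mpr ⟨by omega, by omega⟩
      · intro j hj
        obtain ⟨hj1, hj2⟩ := Finset.mem_Icc.mp hj
        exact Finset.mem_filter.mpr ⟨Finset.mem_range.mpr (by omega),
          Nat.odd_iff.mpr (by omega)⟩
      · intro x hx
        have hx2' := Nat.odd_iff.mp (Finset.mem_filter.mp hx).2
        omega
      · intro j hj
        have := (Finset.mem_Icc.mp hj).1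
        omega
      · intro x hx
        have hx2' := Nat.odd_iff.mp (Finset.mem_filter.mp hx).2
        rw [show 2 * ((x + 1) / 2) - 1 = x from by omega]
    have hsplit : ∑ j ∈ Finset.Icc 1 (a / 2),
            (b.choose (2 * j - 1) : ℚ) * (2 * PowerSeries.coeff (R := ℚ) n
              (Phi (2 * j - 1) * (if 2 * j - 1 = b then Pser else Cser (b - (2 * j - 1)))))
        = (∑ j ∈ Finset.Icc 1 (a / 2 - 1),
            (b.choose (2 * j - 1) : ℚ) * (2 * PowerSeries.coeff (R := ℚ) n
              (Phi (2 * j - 1) * Cser (a - 2 * j))))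
          + 2 * PowerSeries.coeff (R := ℚ) n (Phi b * Pser) := by
      have ha2' : a / 2 - 1 + 1 = a / 2 := by omega
      rw [← ha2', Finset.sum_Icc_succ_top (by omega)]
      congr 1
      · refine Finset.sum_congr rfl fun j hj => ?_
        obtain ⟨hj1, hj2⟩ := Finset.mem_Icc.mp hj
        rw [if_neg (by omega), show b - (2 * j - 1) = a - 2 * j from by omega]
      · rw [show 2 * (a / 2 - 1 + 1) - 1 = b from by omega, if_pos rfl, Nat.choose_self,
          Nat.cast_one, one_mul]
    rw [hL, hcoeff, hstep, hfilter, hreindex, hsplit, map_add, h2C, h2C, map_sum]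
    congr 1
    rw [Finset.mul_sum]
    refine Finset.sum_congr rfl fun j hj => ?_
    rw [hNC]
    ring
end
end
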